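/- arXiv:2410.00784 — 2 statements merged into one kernel-verified Lean document; each statement's English description precedes it below -/
import Mathlib

section
/- Let (Y, d) be a metric space, let E be a real normed vector space, and let Φ : Y → E be a surjective map. Suppose there are real numbers r, r' > 0 such that for all z, w ∈ Y with ‖Φ(w) − Φ(z)‖ ≤ r' one has d(z, w) ≤ r. Then for all x, y ∈ Y, d(x, y) ≤ (r/r')·‖Φ(x) − Φ(y)‖ + r. -/
private lemma chain_aux {Y E : Type*} [MetricSpace Y]
    [NormedAddCommGroup E] [NormedSpace ℝ E]
    (Φ : Y → E) (hΦ : Function.Surjective Φ)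
    (r r' : ℝ) (hr : 0 < r) (hr' : 0 < r')
    (hstep : ∀ z w : Y, ‖Φ w - Φ z‖ ≤ r' → dist z w ≤ r) :
    ∀ n : ℕ, ∀ x y : Y, ‖Φ x - Φ y‖ ≤ ((n : ℝ) + 1) * r' → dist x y ≤ ((n : ℝ) + 1) * r := by
  intro n
  induction n with
  | zero =>
    intro x y h
    simpa using hstep x y (by simpa [norm_sub_rev] using h)
  | succ n ih =>
    intro x y h
    by_cases hle : ‖Φ x - Φ y‖ ≤ ((n : ℝ) + 1) * r'
    · have := ih x y hle
      push_cast
      nlinarith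
    · push_neg at hle
      set v := Φ y - Φ x with hv
      have hvn : ‖v‖ = ‖Φ x - Φ y‖ := norm_sub_rev _ _
      have hvpos : 0 < ‖v‖ := by
        rw [hvn]; exact lt_trans (by positivity) hle
      set c : ℝ := (((n : ℝ) + 1) * r') / ‖v‖ with hc
      have hc0 : 0 ≤ c := by positivity
      have hc1 : c ≤ 1 := by
        rw [hc, div_le_one hvpos, hvn]; exact hle.le
      obtain ⟨z, hz⟩ := hΦ (Φ x + c • v)
      have h1 : ‖Φ x - Φ z‖ = ((n : ℝ) + 1) * r' := by
        rw [hz]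
        have : Φ x - (Φ x + c • v) = -(c • v) := by abel
        rw [this, norm_neg, norm_smul, Real.norm_eq_abs, abs_of_nonneg hc0, hc,
          div_mul_cancel₀ _ (ne_of_gt hvpos)]
      have h2 : ‖Φ y - Φ z‖ ≤ r' := by
        rw [hz]
        have : Φ y - (Φ x + c • v) = (1 - c) • v := by
          rw [sub_smul, one_smul, hv]; abel
        rw [this, norm_smul, Real.norm_eq_abs, abs_of_nonneg (by linarith)]
        have hcast : (((n : ℝ) + 1) + 1) * r' = ((n : ℝ) + 2) * r' := by ring
        have hub : ‖v‖ ≤ ((n : ℝ) + 2) * r' := by rw [hvn]; push_cast at h; linarith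
        have : (1 - c) * ‖v‖ = ‖v‖ - ((n : ℝ) + 1) * r' := by
          rw [hc]; field_simp
        rw [this]; linarith
      have d1 : dist x z ≤ ((n : ℝ) + 1) * r := ih x z (le_of_eq h1)
      have d2 : dist z y ≤ r := hstep z y h2
      calc dist x y ≤ dist x z + dist z y := dist_triangle _ _ _
        _ ≤ ((n : ℝ) + 1) * r + r := add_le_add d1 d2
        _ = (((n : ℕ) + 1 : ℕ) + 1 : ℝ) * r := by push_cast; ring

/-- Chaining estimate: if `Φ : Y → E` is surjective and any two points whose `Φ`-images are
at distance at most `r'` are themselves at distance at most `r`, then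
`d(x,y) ≤ (r/r')·‖Φ x − Φ y‖ + r` for all `x, y`. -/
theorem dist_le_of_fibered_chaining {Y E : Type*} [MetricSpace Y]
    [NormedAddCommGroup E] [NormedSpace ℝ E]
    (Φ : Y → E) (hΦ : Function.Surjective Φ)
    (r r' : ℝ) (hr : 0 < r) (hr' : 0 < r')
    (hstep : ∀ z w : Y, ‖Φ w - Φ z‖ ≤ r' → dist z w ≤ r) :
    ∀ x y : Y, dist x y ≤ (r / r') * ‖Φ x - Φ y‖ + r := by
  intro x y
  set t : ℝ := ‖Φ x - Φ y‖ with ht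
  have ht0 : 0 ≤ t := norm_nonneg _
  set n : ℕ := ⌈t / r'⌉₊ with hn
  rcases Nat.eq_zero_or_pos n with h0 | hpos
  · have : t / r' ≤ 0 := by
      by_contra hcon
      push_neg at hcon
      have := Nat.ceil_pos.mpr hcon
      omega
    have ht0' : t = 0 := le_antisymm (by
      by_contra hcon
      push_neg at hcon
      exact absurd this (not_le.mpr (div_pos hcon hr'))) ht0
    have hle : dist x y ≤ r := hstep x y (by
      rw [norm_sub_rev]
      have : ‖Φ x - Φ y‖ = t := ht.symm
      rw [this, ht0']
      exact hr'.le)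
    rw [ht0']
    linarith
  · obtain ⟨m, hm⟩ : ∃ m : ℕ, n = m + 1 := ⟨n - 1, by omega⟩
    have hlem : t ≤ ((m : ℝ) + 1) * r' := by
      have h1 : t / r' ≤ (n : ℝ) := Nat.le_ceil _
      have : t ≤ (n : ℝ) * r' := by
        rw [div_le_iff₀ hr'] at h1; linarith
      rw [hm] at this; push_cast at this; linarith
    have hd := chain_aux Φ hΦ r r' hr hr' hstep m x y hlem
    have hceil : (n : ℝ) ≤ t / r' + 1 := by
      have := Nat.ceil_lt_add_one (div_nonneg ht0 hr'.le)
      rw [← hn] at this; linarith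
    have : ((m : ℝ) + 1) * r ≤ (t / r' + 1) * r := by
      have : ((m : ℝ) + 1) ≤ t / r' + 1 := by rw [hm] at hceil; push_cast at hceil; linarith
      nlinarith
    have hfin : dist x y ≤ (t / r' + 1) * r := le_trans hd this
    calc dist x y ≤ (t / r' + 1) * r := hfin
      _ = (r / r') * t + r := by field_simp
end

section
/- Let Γ be a group acting on a probability space (X, μ) by measure-preserving measurable maps, and let Z : Γ × X → ℝ^k be a cocycle over the action (i.e. for all γ, γ' ∈ Γ, Z(γγ', x) = Z(γ, γ'·x) + Z(γ', x) for μ-almost every x) with Z(γ, ·) integrable for every γ. Assume: (a) there is a measurable map φ : X → ℝ^k such that for every γ ∈ Γ, Z(γ, x) = φ(γ·x) − φ(x) for μ-almost every x; (b) there is a ∈ Γ such that the transformation x ↦ a·x is ergodic with respect to μ and Z(a, ·) is μ-almost everywhere equal to a constant; (c) every group homomorphism from Γ to (ℝ^k, +) is trivial. Then for every γ ∈ Γ, Z(γ, x) = 0 for μ-almost every x. -/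
open MeasureTheory

/-- If an integrable `ℝᵏ`-valued cocycle `Z` over a measure-preserving `Γ`-action on a
probability space is a measurable coboundary, is a.e. constant over some ergodic element `a`,
and every homomorphism `Γ → (ℝᵏ, +)` is trivial, then `Z` vanishes almost everywhere. -/
theorem cocycle_vanishes_of_coboundary_ergodic_no_homomorphism
    {Γ X : Type*} [Group Γ] [MulAction Γ X] [MeasurableSpace X]
    (μ : Measure X) [IsProbabilityMeasure μ] (k : ℕ)
    (hpres : ∀ γ : Γ, MeasurePreserving (fun x : X => γ • x) μ μ)
    (Z : Γ → X → EuclideanSpace ℝ (Fin k))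
    (hint : ∀ γ : Γ, Integrable (Z γ) μ)
    (hcoc : ∀ γ γ' : Γ, ∀ᵐ x ∂μ, Z (γ * γ') x = Z γ (γ' • x) + Z γ' x)
    (φ : X → EuclideanSpace ℝ (Fin k)) (hφ : Measurable φ)
    (hcob : ∀ γ : Γ, ∀ᵐ x ∂μ, Z γ x = φ (γ • x) - φ x)
    (a : Γ) (herg : Ergodic (fun x : X => a • x) μ)
    (hconst : ∃ c : EuclideanSpace ℝ (Fin k), ∀ᵐ x ∂μ, Z a x = c)
    (htriv : ∀ f : Γ → EuclideanSpace ℝ (Fin k),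
      (∀ γ γ' : Γ, f (γ * γ') = f γ + f γ') → ∀ γ : Γ, f γ = 0) :
    ∀ γ : Γ, ∀ᵐ x ∂μ, Z γ x = 0 := by
  -- the integral of the cocycle is a homomorphism
  have hcompInt : ∀ γ γ' : Γ, Integrable (fun x => Z γ (γ' • x)) μ := fun γ γ' =>
    ((hpres γ').integrable_comp (hint γ).aestronglyMeasurable).mpr (hint γ)
  have hcompEq : ∀ γ γ' : Γ, ∫ x, Z γ (γ' • x) ∂μ = ∫ x, Z γ x ∂μ := by
    intro γ γ'
    have hmap : ∫ x, Z γ x ∂(Measure.map (fun x : X => γ' • x) μ) = ∫ x, Z γ (γ' • x) ∂μ :=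
      integral_map (hpres γ').measurable.aemeasurable
        (by rw [(hpres γ').map_eq]; exact (hint γ).aestronglyMeasurable)
    rw [← hmap, (hpres γ').map_eq]
  have hhom : ∀ γ γ' : Γ,
      (fun γ => ∫ x, Z γ x ∂μ) (γ * γ')
        = (fun γ => ∫ x, Z γ x ∂μ) γ + (fun γ => ∫ x, Z γ x ∂μ) γ' := by
    intro γ γ'
    simp only
    rw [integral_congr_ae (hcoc γ γ'), integral_add (hcompInt γ γ') (hint γ'), hcompEq]
  have hzero : ∀ γ : Γ, ∫ x, Z γ x ∂μ = 0 := htriv _ hhom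
  -- hence the constant value of Z a is zero
  obtain ⟨c, hc⟩ := hconst
  have hc0 : c = 0 := by
    have := integral_congr_ae hc
    rw [hzero a, integral_const] at this
    simpa using this.symm
  -- φ is a.e. invariant under the ergodic map, hence a.e. constant
  have hinv : (fun x => φ (a • x)) =ᵐ[μ] φ := by
    filter_upwards [hcob a, hc] with x h1 h2
    have h : φ (a • x) - φ x = 0 := by rw [← h1, h2, hc0]
    exact sub_eq_zero.mp h
  obtain ⟨c0, hc0'⟩ := herg.ae_eq_const_of_ae_eq_comp_ae
    hφ.aestronglyMeasurable hinv
  intro γ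
  have hpull : (fun x => φ (γ • x)) =ᵐ[μ] fun _ => c0 :=
    (hpres γ).quasiMeasurePreserving.ae_eq hc0'
  filter_upwards [hcob γ, hpull, hc0'] with x h1 h2 h3
  rw [h1, h2, h3]
  simp
end
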